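/- If P is an irreducible, aperiodic stochastic matrix on a finite state space with invariant distribution π, then for every initial distribution λ and every state j, Pr(X^t = j) = (λP^t)_j converges to π_j as t → ∞. -/

import Mathlib

/-!
Irreducibility and aperiodicity make some power `Q = P ^ T` entrywise positive, say `δ ≤ Q i j`.
On vectors with coordinate sum zero, a stochastic matrix does not increase the `ℓ¹` norm, and `Q`
contracts it by the factor `1 - card I * δ < 1` (Doeblin). Since `λ - π` has sum zero and
`π P ^ t = π`, the difference `λ P ^ t - π = (λ - π) P ^ t` decays geometrically.
-/

open Matrix Filter Finset

namespace Matrix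

variable {n R : Type*} [Fintype n]

theorem sum_vecMul_of_sum_row_eq_one [CommSemiring R] {M : Matrix n n R}
    (hM : ∀ i, ∑ j, M i j = 1) (x : n → R) : ∑ j, (x ᵥ* M) j = ∑ i, x i := by
  simp only [vecMul, dotProduct]
  rw [sum_comm]
  simp [← mul_sum, hM]

section LinearOrderedField

variable [Field R] [LinearOrder R] [IsStrictOrderedRing R]

/-- Subtracting the constant `δ` from every entry does not change `x ᵥ* M` when `∑ x = 0`, and
what is left is a nonnegative matrix with row sums `1 - card n * δ`. -/
theorem sum_abs_vecMul_le_of_le_apply {M : Matrix n n R} (hM : ∀ i, ∑ j, M i j = 1) {δ : R}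
    (hδ : ∀ i j, δ ≤ M i j) {x : n → R} (hx : ∑ i, x i = 0) :
    ∑ j, |(x ᵥ* M) j| ≤ (1 - Fintype.card n * δ) * ∑ i, |x i| := by
  have hshift : ∀ j, (x ᵥ* M) j = ∑ i, x i * (M i j - δ) := fun j => by
    simp only [vecMul, dotProduct, mul_sub, sum_sub_distrib, ← sum_mul, hx, zero_mul, sub_zero]
  calc ∑ j, |(x ᵥ* M) j| ≤ ∑ j, ∑ i, |x i| * (M i j - δ) := by
        gcongr with j
        rw [hshift]
        refine (abs_sum_le_sum_abs _ _).trans_eq (sum_congr rfl fun i _ => ?_)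
        rw [abs_mul, abs_of_nonneg (sub_nonneg.2 (hδ i j))]
    _ = (1 - Fintype.card n * δ) * ∑ i, |x i| := by
        rw [sum_comm, mul_sum]
        refine sum_congr rfl fun i _ => ?_
        rw [← mul_sum, sum_sub_distrib, hM, sum_const, card_univ, nsmul_eq_mul, mul_comm]

theorem card_mul_le_one_of_le_apply [Nonempty n] {M : Matrix n n R} (hM : ∀ i, ∑ j, M i j = 1)
    {δ : R} (hδ : ∀ i j, δ ≤ M i j) : Fintype.card n * δ ≤ 1 := by
  obtain ⟨i⟩ := ‹Nonempty n›
  calc Fintype.card n * δ = ∑ _j : n, δ := by simp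
    _ ≤ ∑ j, M i j := sum_le_sum fun j _ => hδ i j
    _ = 1 := hM i

theorem sum_abs_vecMul_pow_le [DecidableEq n] [Nonempty n] {P : Matrix n n R}
    (hP : P ∈ rowStochastic R n) {T : ℕ} {δ : R} (hδ : ∀ i j, δ ≤ (P ^ T) i j)
    {x : n → R} (hx : ∑ i, x i = 0) (t : ℕ) :
    ∑ j, |(x ᵥ* P ^ t) j| ≤ (1 - Fintype.card n * δ) ^ (t / T) * ∑ i, |x i| := by
  have hpow (t : ℕ) : ∀ i, ∑ j, (P ^ t) i j = 1 :=
    sum_row_of_mem_rowStochastic (pow_mem hP t)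
  have hsum (t : ℕ) : ∑ i, (x ᵥ* P ^ t) i = 0 := by
    rw [sum_vecMul_of_sum_row_eq_one (hpow t), hx]
  set c := 1 - Fintype.card n * δ
  set f : ℕ → R := fun t => ∑ j, |(x ᵥ* P ^ t) j|
  have hf_anti : Antitone f := antitone_nat_of_succ_le fun t => by
    simpa [f, pow_succ, ← vecMul_vecMul] using
      sum_abs_vecMul_le_of_le_apply (hpow 1) (δ := 0) (by simpa using hP.1) (hsum t)
  have hgeom (k : ℕ) : f (T * k) ≤ c ^ k * f 0 := by
    induction k with
    | zero => simp [f]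
    | succ k ih =>
      calc f (T * (k + 1)) ≤ c * f (T * k) := by
            simpa [f, mul_add, pow_add, ← vecMul_vecMul] using
              sum_abs_vecMul_le_of_le_apply (hpow T) hδ (hsum (T * k))
        _ ≤ c ^ (k + 1) * f 0 := by
            rw [pow_succ', mul_assoc]
            exact mul_le_mul_of_nonneg_left ih
              (sub_nonneg.2 (card_mul_le_one_of_le_apply (hpow T) hδ))
  simpa [f] using (hf_anti (Nat.mul_div_le t T)).trans (hgeom _)

end LinearOrderedField

section Primitive

variable [Ring R] [LinearOrder R] [IsStrictOrderedRing R] [DecidableEq n] {A : Matrix n n R}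

theorem pow_apply_mul_pow_apply_le_pow_add_apply (hA : ∀ i j, 0 ≤ A i j) (a b : ℕ)
    (i k j : n) :
    (A ^ a) i k * (A ^ b) k j ≤ (A ^ (a + b)) i j := by
  rw [pow_add, mul_apply]
  exact single_le_sum (f := fun k => (A ^ a) i k * (A ^ b) k j)
    (fun k _ => mul_nonneg (pow_apply_nonneg hA a i k) (pow_apply_nonneg hA b k j)) (mem_univ k)

/-- A path `i → j` of length `t i j` can be padded at `i` by a loop of any length at least
`T i`. -/
theorem isPrimitive_of_irreducible_of_aperiodic (hA : ∀ i j, 0 ≤ A i j)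
    (hirr : ∀ i j, ∃ t : ℕ, 0 < (A ^ t) i j)
    (haper : ∀ i, ∃ T : ℕ, ∀ t ≥ T, 0 < (A ^ t) i i) :
    A.IsPrimitive := by
  choose t ht using hirr
  choose T hT using haper
  obtain ⟨N, hN⟩ := Finite.exists_le fun p : n × n => t p.1 p.2 + T p.1
  refine ⟨hA, N + 1, N.succ_pos, fun i j => ?_⟩
  have hij : t i j + T i ≤ N := hN (i, j)
  have hsplit : N + 1 = (N + 1 - t i j) + t i j := by omega
  rw [hsplit]
  exact (mul_pos (hT i _ (by omega)) (ht i j)).trans_le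
    (pow_apply_mul_pow_apply_le_pow_add_apply hA _ _ i i j)

end Primitive

theorem tendsto_vecMul_pow_of_isPrimitive [DecidableEq n] {P : Matrix n n ℝ}
    (hP : P ∈ rowStochastic ℝ n) (hprim : P.IsPrimitive) {x : n → ℝ} (hx : ∑ i, x i = 0) :
    Tendsto (fun t => x ᵥ* P ^ t) atTop (nhds 0) := by
  rcases isEmpty_or_nonempty n with hn | hn
  · exact tendsto_pi_nhds.2 fun j => isEmptyElim j
  obtain ⟨T, hT, hQ⟩ := hprim.exists_pos_pow
  obtain ⟨⟨i₀, j₀⟩, hmin⟩ := Finite.exists_min fun p : n × n => (P ^ T) p.1 p.2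
  have hδ : ∀ i j, (P ^ T) i₀ j₀ ≤ (P ^ T) i j := fun i j => hmin (i, j)
  set c := 1 - Fintype.card n * (P ^ T) i₀ j₀
  have hc0 : 0 ≤ c :=
    sub_nonneg.2 (card_mul_le_one_of_le_apply (sum_row_of_mem_rowStochastic (pow_mem hP T)) hδ)
  have hc1 : c < 1 := sub_lt_self _ (mul_pos (by exact_mod_cast Fintype.card_pos) (hQ i₀ j₀))
  have hlim : Tendsto (fun t => c ^ (t / T) * ∑ i, |x i|) atTop (nhds 0) := by
    simpa using ((tendsto_pow_atTop_nhds_zero_of_lt_one hc0 hc1).comp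
      (Nat.tendsto_div_const_atTop hT.ne')).mul_const _
  refine tendsto_pi_nhds.2 fun j => squeeze_zero_norm (fun t => ?_) hlim
  exact (single_le_sum (f := fun j => |(x ᵥ* P ^ t) j|) (fun _ _ => abs_nonneg _)
    (mem_univ j)).trans (sum_abs_vecMul_pow_le hP hδ hx t)

end Matrix

theorem convergence_to_invariant_general {I : Type*} [Fintype I] [DecidableEq I]
    (P : Matrix I I ℝ) (hP0 : ∀ i j, 0 ≤ P i j) (hP1 : ∀ i, ∑ j, P i j = 1)
    (hirr : ∀ i j, ∃ t : ℕ, 0 < (P ^ t) i j)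
    (haper : ∀ i, ∃ T : ℕ, ∀ t ≥ T, 0 < (P ^ t) i i)
    (pi : I → ℝ) (hpi1 : ∑ i, pi i = 1)
    (hinv : pi ᵥ* P = pi)
    (lam : I → ℝ) (hlam1 : ∑ i, lam i = 1) :
    ∀ j, Tendsto (fun t : ℕ => (lam ᵥ* (P ^ t)) j) atTop (nhds (pi j)) := by
  have hdiff : Tendsto (fun t => (lam - pi) ᵥ* P ^ t) atTop (nhds 0) :=
    tendsto_vecMul_pow_of_isPrimitive (mem_rowStochastic_iff_sum.2 ⟨hP0, hP1⟩)
      (isPrimitive_of_irreducible_of_aperiodic hP0 hirr haper)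
      (by simp [sum_sub_distrib, hlam1, hpi1])
  have hpi_pow (t : ℕ) : pi ᵥ* P ^ t = pi := by
    induction t with
    | zero => simp
    | succ t ih => rw [pow_succ, ← vecMul_vecMul, ih, hinv]
  intro j
  simpa [sub_vecMul, hpi_pow] using (tendsto_pi_nhds.1 hdiff j).add_const (pi j)

/-- For an irreducible, aperiodic stochastic matrix on a finite state space
with invariant distribution `π`, the marginals `Pr(X^t = j) = (λ P^t)_j` converge to `π_j`
as `t → ∞`, for every initial distribution `λ` and every state `j`. -/
theorem convergence_to_invariant {I : Type*} [Fintype I] [DecidableEq I]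
    (P : Matrix I I ℝ) (hP0 : ∀ i j, 0 ≤ P i j) (hP1 : ∀ i, ∑ j, P i j = 1)
    (hirr : ∀ i j, ∃ t : ℕ, 0 < (P ^ t) i j)
    (haper : ∀ i, ∃ T : ℕ, ∀ t ≥ T, 0 < (P ^ t) i i)
    (pi : I → ℝ) (hpi0 : ∀ i, 0 ≤ pi i) (hpi1 : ∑ i, pi i = 1)
    (hinv : pi ᵥ* P = pi)
    (lam : I → ℝ) (hlam0 : ∀ i, 0 ≤ lam i) (hlam1 : ∑ i, lam i = 1) :
    ∀ j, Tendsto (fun t : ℕ => (lam ᵥ* (P ^ t)) j) atTop (nhds (pi j)) :=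
  convergence_to_invariant_general P hP0 hP1 hirr haper pi hpi1 hinv lam hlam1
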